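/- arXiv:1601.00207 — 2 statements merged into one kernel-verified Lean document; each statement's English description precedes it below -/
import Mathlib

section
/- If 1 ∈ U and U contains elements u, v such that 1, u, v are pairwise non-±-equal (i.e., u ≠ ±1, v ≠ ±1, u ≠ ±v), then R(U) is closed under addition and under additive inverses; that is, R(U) is an additive subgroup of ℂ. -/
open Complex

/-- The bracket `[x,y] = x * conj y - y * conj x`. -/
noncomputable def brkt (x y : ℂ) : ℂ := x * (starRingEnd ℂ) y - y * (starRingEnd ℂ) x

/-- `lineInt α β p q` is the intersection point `I_{α,β}(p,q)` of the line through `p`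
with direction `α` and the line through `q` with direction `β` (for unit `α ≠ ±β`),
given by the formula of Buhler et al. -/
noncomputable def lineInt (α β p q : ℂ) : ℂ :=
  brkt α p / brkt α β * β + brkt β q / brkt β α * α

/-- The sets `S n` in the inductive construction. -/
def stepSet (U : Set ℂ) : ℕ → Set ℂ
  | 0 => {0, 1}
  | n + 1 => {z | ∃ α ∈ U, ∃ β ∈ U, α ≠ β ∧ α ≠ -β ∧
      ∃ p ∈ stepSet U n, ∃ q ∈ stepSet U n, z = lineInt α β p q}

/-- `RU U = ⋃ n, S n`. -/
def RU (U : Set ℂ) : Set ℂ := ⋃ n, stepSet U n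

/-- Elementary monomials of `U`. -/
def IsElem (U : Set ℂ) (z : ℂ) : Prop :=
  ∃ α ∈ U, ∃ β ∈ U, α ≠ β ∧ α ≠ -β ∧ z = lineInt α β 0 1

/-- Monomials of `U`, defined inductively. -/
inductive IsMonomial (U : Set ℂ) : ℂ → Prop
  | elementary (α β : ℂ) (hα : α ∈ U) (hβ : β ∈ U) (h1 : α ≠ β) (h2 : α ≠ -β) :
      IsMonomial U (lineInt α β 0 1)
  | step (α β m : ℂ) (hα : α ∈ U) (hβ : β ∈ U) (h1 : α ≠ β) (h2 : α ≠ -β)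
      (hm : IsMonomial U m) : IsMonomial U (lineInt α β 0 m)

/-- `P`: the real numbers arising as length-two monomials `I_{γ,δ}(0,z)` on the real axis. -/
def projSet (U : Set ℂ) : Set ℝ :=
  {r | ∃ γ ∈ U, ∃ δ ∈ U, γ ≠ δ ∧ γ ≠ -δ ∧ ∃ z, IsElem U z ∧ (r : ℂ) = lineInt γ δ 0 z}

/-- `m` is a `ℤ[P]`-linear combination of elementary monomials of `U`. -/
def IsZPComb (U : Set ℂ) (m : ℂ) : Prop :=
  ∃ (n : ℕ) (c : Fin n → ℝ) (z : Fin n → ℂ),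
    (∀ i, c i ∈ Subring.closure (projSet U)) ∧ (∀ i, IsElem U (z i)) ∧
    m = ∑ i, (c i : ℂ) * z i

/-!
If `brkt α β ≠ 0`, then `α, β` is a real basis of `ℂ` and `lineInt α β p q` is the
`β`-component of `p` plus the `α`-component of `q`. So a set `S ∋ 0` closed under these
operations contains both components of each of its points, and the sum of a point of `ℝ α`
and a point of `ℝ β`. With a third direction `γ`, composing component maps through points
off the axis realises `x ↦ x` and `x ↦ -x` on `ℝ α`, which gives sums and negatives of points
of `S` on one axis. Splitting points into components, `S` is an additive subgroup. `R(U)` is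
such a set, with `1, u, v` as the three directions.
-/

section Bracket

lemma brkt_antisymm (x y : ℂ) : brkt y x = -brkt x y := by
  unfold brkt; ring

lemma brkt_ne_zero_comm {x y : ℂ} : brkt x y ≠ 0 ↔ brkt y x ≠ 0 := by
  rw [brkt_antisymm, neg_ne_zero]

lemma brkt_self (x : ℂ) : brkt x x = 0 := by
  simp [brkt]

lemma conj_brkt (x y : ℂ) : (starRingEnd ℂ) (brkt x y) = -brkt x y := by
  simp only [brkt, map_sub, map_mul, Complex.conj_conj]; ring

lemma brkt_add_right (x y z : ℂ) : brkt x (y + z) = brkt x y + brkt x z := by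
  simp only [brkt, map_add]; ring

lemma brkt_neg_right (x y : ℂ) : brkt x (-y) = -brkt x y := by
  simp only [brkt, map_neg]; ring

lemma brkt_smul_right (x y : ℂ) (r : ℝ) : brkt x (r • y) = r • brkt x y := by
  simp only [brkt, Complex.real_smul, map_mul, Complex.conj_ofReal]; ring

lemma brkt_ne_zero_of_norm_eq_one {α β : ℂ} (hα : ‖α‖ = 1) (hβ : ‖β‖ = 1)
    (h₁ : α ≠ β) (h₂ : α ≠ -β) : brkt α β ≠ 0 := by
  intro h
  have hαα : α * (starRingEnd ℂ) α = 1 := by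
    rw [Complex.mul_conj, Complex.normSq_eq_norm_sq, hα]; norm_num
  have hββ : β * (starRingEnd ℂ) β = 1 := by
    rw [Complex.mul_conj, Complex.normSq_eq_norm_sq, hβ]; norm_num
  have hsq : (α - β) * (α + β) = 0 := by
    unfold brkt at h
    linear_combination α * β * h - α ^ 2 * hββ + β ^ 2 * hαα
  rcases mul_eq_zero.mp hsq with h | h
  · exact h₁ (sub_eq_zero.mp h)
  · exact h₂ (eq_neg_of_add_eq_zero_left h)

end Bracket

/-- The component along `α` in the real basis `(α, β)`, i.e. the projection onto `ℝ α`
along `ℝ β`. -/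
noncomputable def axisProj (α β z : ℂ) : ℂ := brkt β z / brkt β α * α

section AxisProj

variable {α β γ : ℂ}

lemma lineInt_eq_axisProj_add_axisProj (α β p q : ℂ) :
    lineInt α β p q = axisProj β α p + axisProj α β q := rfl

lemma axisProj_add (α β z w : ℂ) :
    axisProj α β (z + w) = axisProj α β z + axisProj α β w := by
  simp only [axisProj, brkt_add_right]; ring

lemma axisProj_neg (α β z : ℂ) : axisProj α β (-z) = -axisProj α β z := by
  simp only [axisProj, brkt_neg_right]; ring

lemma axisProj_zero (α β : ℂ) : axisProj α β 0 = 0 := by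
  simp [axisProj, brkt]

lemma axisProj_mem_span (α β z : ℂ) : axisProj α β z ∈ ℝ ∙ α := by
  have hreal : (starRingEnd ℂ) (brkt β z / brkt β α) = brkt β z / brkt β α := by
    rw [map_div₀, conj_brkt, conj_brkt, neg_div_neg_eq]
  exact Submodule.mem_span_singleton.mpr
    ⟨(brkt β z / brkt β α).re, by
      rw [Complex.real_smul, Complex.conj_eq_iff_re.mp hreal]; rfl⟩

lemma axisProj_eq_zero_of_mem_span {z : ℂ} (hz : z ∈ ℝ ∙ β) : axisProj α β z = 0 := by
  obtain ⟨t, rfl⟩ := Submodule.mem_span_singleton.mp hz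
  rw [axisProj, brkt_smul_right, brkt_self, smul_zero, zero_div, zero_mul]

lemma axisProj_eq_self_of_mem_span (h : brkt β α ≠ 0) {z : ℂ} (hz : z ∈ ℝ ∙ α) :
    axisProj α β z = z := by
  obtain ⟨t, rfl⟩ := Submodule.mem_span_singleton.mp hz
  rw [axisProj, brkt_smul_right, Complex.real_smul, Complex.real_smul]
  field_simp

lemma axisProj_add_axisProj (h : brkt α β ≠ 0) (z : ℂ) :
    axisProj α β z + axisProj β α z = z := by
  have key : brkt α z * β - brkt β z * α = z * brkt α β := by unfold brkt; ring
  unfold axisProj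
  rw [brkt_antisymm α β]
  field_simp
  linear_combination key

lemma axisProj_axisProj_of_mem_span (hβγ : brkt β γ ≠ 0) (hγα : brkt γ α ≠ 0) {x : ℂ}
    (hx : x ∈ ℝ ∙ α) : axisProj α γ (axisProj β γ x) = x := by
  conv_rhs => rw [← axisProj_eq_self_of_mem_span hγα hx, ← axisProj_add_axisProj hβγ x]
  rw [axisProj_add, axisProj_eq_zero_of_mem_span (axisProj_mem_span γ β x), add_zero]

lemma axisProj_axisProj_axisProj_of_mem_span (hαβ : brkt α β ≠ 0) (hβγ : brkt β γ ≠ 0)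
    (hγα : brkt γ α ≠ 0) {x : ℂ} (hx : x ∈ ℝ ∙ α) :
    axisProj α β (axisProj γ α (axisProj β γ x)) = -x := by
  have hx' : axisProj γ α (axisProj β γ x) = -axisProj γ β x := by
    have h := axisProj_add γ α (axisProj β γ x) (axisProj γ β x)
    rw [axisProj_add_axisProj hβγ, axisProj_eq_zero_of_mem_span hx,
      axisProj_eq_self_of_mem_span (brkt_ne_zero_comm.mp hγα) (axisProj_mem_span γ β x)] at h
    linear_combination -h
  have hβα : brkt β α ≠ 0 := brkt_ne_zero_comm.mp hαβ
  have h := axisProj_add α β (axisProj β γ x) (axisProj γ β x)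
  rw [axisProj_add_axisProj hβγ, axisProj_eq_zero_of_mem_span (axisProj_mem_span β γ x),
    axisProj_eq_self_of_mem_span hβα hx, zero_add] at h
  rw [hx', axisProj_neg, ← h]

end AxisProj

def IsLineIntClosed (D S : Set ℂ) : Prop :=
  ∀ α ∈ D, ∀ β ∈ D, brkt α β ≠ 0 → ∀ p ∈ S, ∀ q ∈ S, lineInt α β p q ∈ S

namespace IsLineIntClosed

variable {D S : Set ℂ} {α β γ : ℂ}

lemma axisProj_mem (hS : IsLineIntClosed D S) (h0 : (0 : ℂ) ∈ S)
    (hα : α ∈ D) (hβ : β ∈ D) (hαβ : brkt α β ≠ 0) {p : ℂ} (hp : p ∈ S) :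
    axisProj α β p ∈ S := by
  have h := hS β hβ α hα (brkt_ne_zero_comm.mp hαβ) p hp 0 h0
  rwa [lineInt_eq_axisProj_add_axisProj, axisProj_zero, add_zero] at h

lemma add_mem_of_mem_span (hS : IsLineIntClosed D S) (hα : α ∈ D) (hβ : β ∈ D)
    (hαβ : brkt α β ≠ 0) {x y : ℂ} (hx : x ∈ S) (hy : y ∈ S) (hxα : x ∈ ℝ ∙ α)
    (hyβ : y ∈ ℝ ∙ β) : x + y ∈ S := by
  have h := hS β hβ α hα (brkt_ne_zero_comm.mp hαβ) x hx y hy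
  rwa [lineInt_eq_axisProj_add_axisProj, axisProj_eq_self_of_mem_span
    (brkt_ne_zero_comm.mp hαβ) hxα, axisProj_eq_self_of_mem_span hαβ hyβ] at h

lemma add_mem_of_mem_span_same (hS : IsLineIntClosed D S) (h0 : (0 : ℂ) ∈ S)
    (hα : α ∈ D) (hβ : β ∈ D) (hγ : γ ∈ D)
    (hαβ : brkt α β ≠ 0) (hβγ : brkt β γ ≠ 0) (hγα : brkt γ α ≠ 0)
    {x y : ℂ} (hx : x ∈ S) (hy : y ∈ S) (hxα : x ∈ ℝ ∙ α) (hyα : y ∈ ℝ ∙ α) :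
    x + y ∈ S := by
  have hy' : axisProj β γ y ∈ S := hS.axisProj_mem h0 hβ hγ hβγ hy
  have hxy' : x + axisProj β γ y ∈ S :=
    hS.add_mem_of_mem_span hα hβ hαβ hx hy' hxα (axisProj_mem_span β γ y)
  have h := hS.axisProj_mem h0 hα hγ (brkt_ne_zero_comm.mp hγα) hxy'
  rwa [axisProj_add, axisProj_eq_self_of_mem_span hγα hxα,
    axisProj_axisProj_of_mem_span hβγ hγα hyα] at h

lemma neg_mem_of_mem_span (hS : IsLineIntClosed D S) (h0 : (0 : ℂ) ∈ S)
    (hα : α ∈ D) (hβ : β ∈ D) (hγ : γ ∈ D)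
    (hαβ : brkt α β ≠ 0) (hβγ : brkt β γ ≠ 0) (hγα : brkt γ α ≠ 0)
    {x : ℂ} (hx : x ∈ S) (hxα : x ∈ ℝ ∙ α) : -x ∈ S := by
  rw [← axisProj_axisProj_axisProj_of_mem_span hαβ hβγ hγα hxα]
  exact hS.axisProj_mem h0 hα hβ hαβ <| hS.axisProj_mem h0 hγ hα hγα <|
    hS.axisProj_mem h0 hβ hγ hβγ hx

lemma add_mem (hS : IsLineIntClosed D S) (h0 : (0 : ℂ) ∈ S)
    (hα : α ∈ D) (hβ : β ∈ D) (hγ : γ ∈ D)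
    (hαβ : brkt α β ≠ 0) (hβγ : brkt β γ ≠ 0) (hγα : brkt γ α ≠ 0)
    {p q : ℂ} (hp : p ∈ S) (hq : q ∈ S) : p + q ∈ S := by
  have hβα := brkt_ne_zero_comm.mp hαβ
  have hαγ := brkt_ne_zero_comm.mp hγα
  have hγβ := brkt_ne_zero_comm.mp hβγ
  have hsum : p + q =
      (axisProj α β p + axisProj α β q) + (axisProj β α p + axisProj β α q) := by
    conv_lhs => rw [← axisProj_add_axisProj hαβ p, ← axisProj_add_axisProj hαβ q]
    ring
  rw [hsum, ← axisProj_add, ← axisProj_add]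
  refine hS.add_mem_of_mem_span hα hβ hαβ ?_ ?_ (axisProj_mem_span _ _ _)
    (axisProj_mem_span _ _ _) <;> rw [axisProj_add]
  · exact hS.add_mem_of_mem_span_same h0 hα hβ hγ hαβ hβγ hγα
      (hS.axisProj_mem h0 hα hβ hαβ hp) (hS.axisProj_mem h0 hα hβ hαβ hq)
      (axisProj_mem_span _ _ _) (axisProj_mem_span _ _ _)
  · exact hS.add_mem_of_mem_span_same h0 hβ hα hγ hβα hαγ hγβ
      (hS.axisProj_mem h0 hβ hα hβα hp) (hS.axisProj_mem h0 hβ hα hβα hq)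
      (axisProj_mem_span _ _ _) (axisProj_mem_span _ _ _)

lemma neg_mem (hS : IsLineIntClosed D S) (h0 : (0 : ℂ) ∈ S)
    (hα : α ∈ D) (hβ : β ∈ D) (hγ : γ ∈ D)
    (hαβ : brkt α β ≠ 0) (hβγ : brkt β γ ≠ 0) (hγα : brkt γ α ≠ 0)
    {p : ℂ} (hp : p ∈ S) : -p ∈ S := by
  have hβα := brkt_ne_zero_comm.mp hαβ
  have hαγ := brkt_ne_zero_comm.mp hγα
  have hγβ := brkt_ne_zero_comm.mp hβγ
  rw [← axisProj_add_axisProj hαβ p, neg_add, ← axisProj_neg, ← axisProj_neg]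
  refine hS.add_mem_of_mem_span hα hβ hαβ ?_ ?_ (axisProj_mem_span _ _ _)
    (axisProj_mem_span _ _ _) <;> rw [axisProj_neg]
  · exact hS.neg_mem_of_mem_span h0 hα hβ hγ hαβ hβγ hγα
      (hS.axisProj_mem h0 hα hβ hαβ hp) (axisProj_mem_span _ _ _)
  · exact hS.neg_mem_of_mem_span h0 hβ hα hγ hβα hαγ hγβ
      (hS.axisProj_mem h0 hβ hα hβα hp) (axisProj_mem_span _ _ _)

end IsLineIntClosed

lemma zero_mem_RU (U : Set ℂ) : (0 : ℂ) ∈ RU U :=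
  Set.mem_iUnion.mpr ⟨0, Or.inl rfl⟩

section RU

variable {U : Set ℂ} {α β : ℂ}

lemma lineInt_mem_stepSet_succ (hα : α ∈ U) (hβ : β ∈ U) (hαβ : brkt α β ≠ 0)
    {n : ℕ} {p q : ℂ} (hp : p ∈ stepSet U n) (hq : q ∈ stepSet U n) :
    lineInt α β p q ∈ stepSet U (n + 1) := by
  refine ⟨α, hα, β, hβ, ?_, ?_, p, hp, q, hq, rfl⟩
  · rintro rfl; exact hαβ (brkt_self α)
  · rintro rfl; exact hαβ (by simp only [brkt, map_neg]; ring)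

lemma stepSet_monotone (hα : α ∈ U) (hβ : β ∈ U) (hαβ : brkt α β ≠ 0) :
    Monotone (stepSet U) := by
  refine monotone_nat_of_le_succ fun n p hp => ?_
  have h := lineInt_mem_stepSet_succ hα hβ hαβ hp hp
  rwa [lineInt_eq_axisProj_add_axisProj,
    axisProj_add_axisProj (brkt_ne_zero_comm.mp hαβ)] at h

lemma isLineIntClosed_RU (hα : α ∈ U) (hβ : β ∈ U) (hαβ : brkt α β ≠ 0) :
    IsLineIntClosed U (RU U) := by
  intro a ha b hb hab p hp q hq
  obtain ⟨m, hm⟩ := Set.mem_iUnion.mp hp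
  obtain ⟨n, hn⟩ := Set.mem_iUnion.mp hq
  have hmono := stepSet_monotone hα hβ hαβ
  exact Set.mem_iUnion.mpr ⟨max m n + 1, lineInt_mem_stepSet_succ ha hb hab
    (hmono (le_max_left m n) hm) (hmono (le_max_right m n) hn)⟩

end RU

/-- if `1 ∈ U` and `U` contains `u, v` with `1, u, v` pairwise non-±-equal,
then `R(U)` is an additive subgroup of `ℂ`. -/
theorem stmt2 (U : Set ℂ) (hU : ∀ z ∈ U, ‖z‖ = 1) (h1U : (1 : ℂ) ∈ U)
    (u v : ℂ) (hu : u ∈ U) (hv : v ∈ U)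
    (hu1 : u ≠ 1) (hu1' : u ≠ -1) (hv1 : v ≠ 1) (hv1' : v ≠ -1)
    (huv : u ≠ v) (huv' : u ≠ -v) :
    ∃ G : AddSubgroup ℂ, (G : Set ℂ) = RU U := by
  have hu1b : brkt u 1 ≠ 0 := brkt_ne_zero_of_norm_eq_one (hU u hu) norm_one hu1 hu1'
  have hv1b : brkt v 1 ≠ 0 := brkt_ne_zero_of_norm_eq_one (hU v hv) norm_one hv1 hv1'
  have huvb : brkt u v ≠ 0 := brkt_ne_zero_of_norm_eq_one (hU u hu) (hU v hv) huv huv'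
  have h1vb : brkt 1 v ≠ 0 := brkt_ne_zero_comm.mp hv1b
  have hvub : brkt v u ≠ 0 := brkt_ne_zero_comm.mp huvb
  have hS := isLineIntClosed_RU hu h1U hu1b
  exact ⟨{ carrier := RU U
           zero_mem' := zero_mem_RU U
           add_mem' := hS.add_mem (zero_mem_RU U) hu h1U hv hu1b h1vb hvub
           neg_mem' := hS.neg_mem (zero_mem_RU U) hu h1U hv hu1b h1vb hvub }, rfl⟩
end

section
/- Let U = {1, u, v, w} where u = e^{iθ₁}, v = e^{iθ₂}, w = e^{iθ₃} with 0 < θ₁ < θ₂ < θ₃ < π, and let x = I_{v,1}(I_{u,w}(0,1), 0). Then every real number of the form I_{γ,1}(z, 0), where γ ∈ U, γ ≠ ±1, and z is an elementary monomial of U, belongs to the set {0, 1, x, 1/x, x/(x−1), 1 − x, 1 − 1/x, 1 − x/(x−1)}; in particular there are at most eight length-two monomials on the real axis. -/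
open Complex

private lemma conj_unit (θ : ℝ) :
    (starRingEnd ℂ) (Complex.exp ((θ:ℂ) * Complex.I)) = (Complex.exp ((θ:ℂ) * Complex.I))⁻¹ := by
  rw [← Complex.exp_conj, ← Complex.exp_neg]
  congr 1
  simp [map_mul, Complex.conj_ofReal, Complex.conj_I]

private lemma exp_ne (s t : ℝ) (h0 : 0 < t - s) (h2 : t - s < 2 * Real.pi) :
    Complex.exp ((s:ℂ) * Complex.I) ≠ Complex.exp ((t:ℂ) * Complex.I) := by
  intro h
  have h1 : Complex.exp (((t - s : ℝ):ℂ) * Complex.I) = 1 := by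
    push_cast
    rw [sub_mul, Complex.exp_sub, ← h, div_self (Complex.exp_ne_zero _)]
  rw [Complex.exp_eq_one_iff] at h1
  obtain ⟨n, hn⟩ := h1
  have hn' : ((t - s : ℝ):ℂ) = ((n : ℝ) * (2 * Real.pi) : ℝ) := by
    have : ((t - s : ℝ):ℂ) * Complex.I = (((n : ℝ) * (2 * Real.pi) : ℝ):ℂ) * Complex.I := by
      rw [hn]; push_cast; ring
    exact mul_right_cancel₀ Complex.I_ne_zero this
  have hr : (t - s : ℝ) = (n : ℝ) * (2 * Real.pi) := by exact_mod_cast hn'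
  have hπ := Real.pi_pos
  rcases lt_or_ge 0 n with hpos | hneg
  · have : (1 : ℝ) ≤ (n : ℝ) := by exact_mod_cast hpos
    nlinarith
  · have : (n : ℝ) ≤ 0 := by exact_mod_cast hneg
    nlinarith

private lemma sq_ne (α β : ℂ) (h1 : α ≠ β) (h2 : α ≠ -β) : β ^ 2 ≠ α ^ 2 := by
  intro h
  have h3 : (α - β) * (α + β) = 0 := by linear_combination -h
  rcases mul_eq_zero.mp h3 with h4 | h4
  · exact h1 (sub_eq_zero.mp h4)
  · exact h2 (eq_neg_of_add_eq_zero_left h4)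

private lemma elem_formula (α β : ℂ) (hα0 : α ≠ 0) (hβ0 : β ≠ 0)
    (hcα : (starRingEnd ℂ) α = α⁻¹) (hcβ : (starRingEnd ℂ) β = β⁻¹)
    (hne : β ^ 2 ≠ α ^ 2) :
    lineInt α β 0 1 = α ^ 2 * (β ^ 2 - 1) / (β ^ 2 - α ^ 2) := by
  have hd : β * α⁻¹ - α * β⁻¹ ≠ 0 := by
    intro h
    apply hne
    field_simp at h
    linear_combination h
  unfold lineInt brkt
  simp only [map_zero, map_one, hcα, hcβ, mul_zero, zero_mul, sub_zero, zero_sub, mul_one,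
    one_mul, zero_div, zero_add, neg_zero]
  rw [div_mul_eq_mul_div, div_eq_div_iff hd (sub_ne_zero.mpr hne)]
  field_simp

private lemma proj_formula (γ z : ℂ) (hγ0 : γ ≠ 0) (hcγ : (starRingEnd ℂ) γ = γ⁻¹)
    (hγ1 : γ ^ 2 ≠ 1) :
    lineInt γ 1 z 0 = (γ ^ 2 * (starRingEnd ℂ) z - z) / (γ ^ 2 - 1) := by
  have hd : γ - γ⁻¹ ≠ 0 := by
    intro h
    apply hγ1
    field_simp at h
    linear_combination h
  unfold lineInt brkt
  simp only [map_zero, map_one, hcγ, mul_zero, zero_mul, sub_zero, zero_sub, mul_one,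
    one_mul, zero_div, zero_add, add_zero, neg_zero]
  rw [div_eq_div_iff hd (sub_ne_zero.mpr hγ1)]
  field_simp

private lemma full_formula (α β γ : ℂ) (hα0 : α ≠ 0) (hβ0 : β ≠ 0) (hγ0 : γ ≠ 0)
    (hcα : (starRingEnd ℂ) α = α⁻¹) (hcβ : (starRingEnd ℂ) β = β⁻¹)
    (hcγ : (starRingEnd ℂ) γ = γ⁻¹)
    (hne : β ^ 2 ≠ α ^ 2) (hγ1 : γ ^ 2 ≠ 1) :
    lineInt γ 1 (lineInt α β 0 1) 0 =
      (β ^ 2 - 1) * (γ ^ 2 - α ^ 2) / ((β ^ 2 - α ^ 2) * (γ ^ 2 - 1)) := by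
  have hz : (starRingEnd ℂ) (α ^ 2 * (β ^ 2 - 1) / (β ^ 2 - α ^ 2)) =
      (β ^ 2 - 1) / (β ^ 2 - α ^ 2) := by
    rw [map_div₀, map_mul, map_sub, map_one, map_pow, map_sub, map_pow, map_pow, hcα, hcβ]
    rw [div_eq_div_iff _ (sub_ne_zero.mpr hne)]
    · field_simp
      ring
    · intro h
      apply sub_ne_zero.mpr hne
      field_simp at h
      linear_combination -h
  rw [elem_formula α β hα0 hβ0 hcα hcβ hne, proj_formula _ _ hγ0 hcγ hγ1, hz]
  rw [div_eq_div_iff (sub_ne_zero.mpr hγ1) (mul_ne_zero (sub_ne_zero.mpr hne) (sub_ne_zero.mpr hγ1))]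
  field_simp [sub_ne_zero.mpr hne]

set_option maxHeartbeats 2000000 in
private lemma key (A B C : ℂ) (hA1 : A ≠ 1) (hB1 : B ≠ 1) (hC1 : C ≠ 1)
    (hAB : A ≠ B) (hAC : A ≠ C) (hBC : B ≠ C)
    (x : ℂ) (hx : x = (C - 1) * (B - A) / ((C - A) * (B - 1)))
    (a b c : ℂ) (ha : a = 1 ∨ a = A ∨ a = B ∨ a = C) (hb : b = 1 ∨ b = A ∨ b = B ∨ b = C)
    (hc : c = A ∨ c = B ∨ c = C) (hab : a ≠ b) :
    (b - 1) * (c - a) / ((b - a) * (c - 1)) ∈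
      ({0, 1, x, 1 / x, x / (x - 1), 1 - x, 1 - 1 / x, 1 - x / (x - 1)} : Set ℂ) := by
  have nA1 : A - 1 ≠ 0 := sub_ne_zero.mpr hA1
  have nB1 : B - 1 ≠ 0 := sub_ne_zero.mpr hB1
  have nC1 : C - 1 ≠ 0 := sub_ne_zero.mpr hC1
  have n1A : (1 : ℂ) - A ≠ 0 := sub_ne_zero.mpr hA1.symm
  have n1B : (1 : ℂ) - B ≠ 0 := sub_ne_zero.mpr hB1.symm
  have n1C : (1 : ℂ) - C ≠ 0 := sub_ne_zero.mpr hC1.symm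
  have nAB : A - B ≠ 0 := sub_ne_zero.mpr hAB
  have nBA : B - A ≠ 0 := sub_ne_zero.mpr hAB.symm
  have nAC : A - C ≠ 0 := sub_ne_zero.mpr hAC
  have nCA : C - A ≠ 0 := sub_ne_zero.mpr hAC.symm
  have nBC : B - C ≠ 0 := sub_ne_zero.mpr hBC
  have nCB : C - B ≠ 0 := sub_ne_zero.mpr hBC.symm
  have hN : (C - 1) * (B - A) ≠ 0 := mul_ne_zero nC1 nBA
  have hD : (C - A) * (B - 1) ≠ 0 := mul_ne_zero nCA nB1
  have hM : (A - 1) * (B - C) ≠ 0 := mul_ne_zero nA1 nBC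
  have hx1 : x - 1 = (A - 1) * (B - C) / ((C - A) * (B - 1)) := by
    rw [hx, div_sub_one hD]; congr 1; ring
  have E4 : 1 / x = (C - A) * (B - 1) / ((C - 1) * (B - A)) := by
    rw [hx, one_div, inv_div]
  have E5 : x / (x - 1) = (C - 1) * (B - A) / ((A - 1) * (B - C)) := by
    rw [hx1, hx, div_div_div_cancel_right₀ hD]
  have E6 : 1 - x = (A - 1) * (C - B) / ((C - A) * (B - 1)) := by
    rw [hx, one_sub_div hD]; congr 1; ring
  have E7 : 1 - 1 / x = (A - 1) * (B - C) / ((C - 1) * (B - A)) := by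
    rw [E4, one_sub_div hN]; congr 1; ring
  have E8 : 1 - x / (x - 1) = (C - A) * (1 - B) / ((A - 1) * (B - C)) := by
    rw [E5, one_sub_div hM]; congr 1; ring
  rcases ha with rfl | rfl | rfl | rfl <;> rcases hb with rfl | rfl | rfl | rfl <;>
    rcases hc with rfl | rfl | rfl <;>
    simp only [Set.mem_insert_iff, Set.mem_singleton_iff] <;>
    first
      | exact absurd rfl hab
      | (refine Or.inl ?_ <;> field_simp [nA1, nB1, nC1, n1A, n1B, n1C, nAB, nBA, nAC, nCA, nBC, nCB] <;> ring1)
      | (refine Or.inr (Or.inl ?_) <;> field_simp [nA1, nB1, nC1, n1A, n1B, n1C, nAB, nBA, nAC, nCA, nBC, nCB] <;> ring1)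
      | (refine Or.inr (Or.inr (Or.inl ?_)) <;> rw [hx] <;> field_simp [nA1, nB1, nC1, n1A, n1B, n1C, nAB, nBA, nAC, nCA, nBC, nCB] <;> ring1)
      | (refine Or.inr (Or.inr (Or.inr (Or.inl ?_))) <;> rw [E4] <;> field_simp [nA1, nB1, nC1, n1A, n1B, n1C, nAB, nBA, nAC, nCA, nBC, nCB] <;> ring1)
      | (refine Or.inr (Or.inr (Or.inr (Or.inr (Or.inl ?_)))) <;> rw [E5] <;> field_simp [nA1, nB1, nC1, n1A, n1B, n1C, nAB, nBA, nAC, nCA, nBC, nCB] <;> ring1)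
      | (refine Or.inr (Or.inr (Or.inr (Or.inr (Or.inr (Or.inl ?_))))) <;> rw [E6] <;> field_simp [nA1, nB1, nC1, n1A, n1B, n1C, nAB, nBA, nAC, nCA, nBC, nCB] <;> ring1)
      | (refine Or.inr (Or.inr (Or.inr (Or.inr (Or.inr (Or.inr (Or.inl ?_)))))) <;> rw [E7] <;> field_simp [nA1, nB1, nC1, n1A, n1B, n1C, nAB, nBA, nAC, nCA, nBC, nCB] <;> ring1)
      | (refine Or.inr (Or.inr (Or.inr (Or.inr (Or.inr (Or.inr (Or.inr ?_)))))) <;> rw [E8] <;> field_simp [nA1, nB1, nC1, n1A, n1B, n1C, nAB, nBA, nAC, nCA, nBC, nCB] <;> ring1)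

/-- for `U = {1, u, v, w}` with `u = e^{iθ₁}, v = e^{iθ₂}, w = e^{iθ₃}`,
`0 < θ₁ < θ₂ < θ₃ < π`, and `x = I_{v,1}(I_{u,w}(0,1), 0)`, every real number of the form
`I_{γ,1}(z, 0)` with `γ ∈ U`, `γ ≠ ±1`, and `z` an elementary monomial, belongs to
`{0, 1, x, 1/x, x/(x−1), 1−x, 1−1/x, 1−x/(x−1)}`. -/
theorem stmt9 (θ₁ θ₂ θ₃ : ℝ) (h1 : 0 < θ₁) (h12 : θ₁ < θ₂) (h23 : θ₂ < θ₃)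
    (h3 : θ₃ < Real.pi)
    (u v w : ℂ) (hu : u = Complex.exp ((θ₁ : ℂ) * Complex.I))
    (hv : v = Complex.exp ((θ₂ : ℂ) * Complex.I))
    (hw : w = Complex.exp ((θ₃ : ℂ) * Complex.I))
    (x : ℂ) (hx : x = lineInt v 1 (lineInt u w 0 1) 0)
    (γ : ℂ) (hγ : γ ∈ ({1, u, v, w} : Set ℂ)) (hγ1 : γ ≠ 1) (hγ1' : γ ≠ -1)
    (z : ℂ) (hz : IsElem {1, u, v, w} z) :
    lineInt γ 1 z 0 ∈
      ({0, 1, x, 1 / x, x / (x - 1), 1 - x, 1 - 1 / x, 1 - x / (x - 1)} : Set ℂ) := by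
  have hπ := Real.pi_pos
  -- basic unit facts
  have hu0 : u ≠ 0 := by rw [hu]; exact Complex.exp_ne_zero _
  have hv0 : v ≠ 0 := by rw [hv]; exact Complex.exp_ne_zero _
  have hw0 : w ≠ 0 := by rw [hw]; exact Complex.exp_ne_zero _
  have hcu : (starRingEnd ℂ) u = u⁻¹ := by rw [hu]; exact conj_unit θ₁
  have hcv : (starRingEnd ℂ) v = v⁻¹ := by rw [hv]; exact conj_unit θ₂
  have hcw : (starRingEnd ℂ) w = w⁻¹ := by rw [hw]; exact conj_unit θ₃
  have hc1 : (starRingEnd ℂ) (1 : ℂ) = (1 : ℂ)⁻¹ := by simp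
  -- squares
  have hu2 : u ^ 2 = Complex.exp (((2 * θ₁ : ℝ) : ℂ) * Complex.I) := by
    rw [hu, sq, ← Complex.exp_add]; congr 1; push_cast; ring
  have hv2 : v ^ 2 = Complex.exp (((2 * θ₂ : ℝ) : ℂ) * Complex.I) := by
    rw [hv, sq, ← Complex.exp_add]; congr 1; push_cast; ring
  have hw2 : w ^ 2 = Complex.exp (((2 * θ₃ : ℝ) : ℂ) * Complex.I) := by
    rw [hw, sq, ← Complex.exp_add]; congr 1; push_cast; ring
  have hA1 : u ^ 2 ≠ 1 := by
    rw [hu2]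
    simpa using (exp_ne 0 (2 * θ₁) (by linarith) (by linarith)).symm
  have hB1 : v ^ 2 ≠ 1 := by
    rw [hv2]
    simpa using (exp_ne 0 (2 * θ₂) (by linarith) (by linarith)).symm
  have hC1 : w ^ 2 ≠ 1 := by
    rw [hw2]
    simpa using (exp_ne 0 (2 * θ₃) (by linarith) (by linarith)).symm
  have hAB : u ^ 2 ≠ v ^ 2 := by
    rw [hu2, hv2]; exact exp_ne (2 * θ₁) (2 * θ₂) (by linarith) (by linarith)
  have hAC : u ^ 2 ≠ w ^ 2 := by
    rw [hu2, hw2]; exact exp_ne (2 * θ₁) (2 * θ₃) (by linarith) (by linarith)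
  have hBC : v ^ 2 ≠ w ^ 2 := by
    rw [hv2, hw2]; exact exp_ne (2 * θ₂) (2 * θ₃) (by linarith) (by linarith)
  -- the elementary monomial z
  obtain ⟨α, hαU, β, hβU, hαβ, hαβ', rfl⟩ := hz
  have hne : β ^ 2 ≠ α ^ 2 := sq_ne α β hαβ hαβ'
  -- facts about α, β, γ
  have hαfacts : (starRingEnd ℂ) α = α⁻¹ ∧ α ≠ 0 ∧
      (α ^ 2 = 1 ∨ α ^ 2 = u ^ 2 ∨ α ^ 2 = v ^ 2 ∨ α ^ 2 = w ^ 2) := by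
    simp only [Set.mem_insert_iff, Set.mem_singleton_iff] at hαU
    rcases hαU with rfl | rfl | rfl | rfl
    · exact ⟨hc1, one_ne_zero, Or.inl (one_pow 2)⟩
    · exact ⟨hcu, hu0, Or.inr (Or.inl rfl)⟩
    · exact ⟨hcv, hv0, Or.inr (Or.inr (Or.inl rfl))⟩
    · exact ⟨hcw, hw0, Or.inr (Or.inr (Or.inr rfl))⟩
  have hβfacts : (starRingEnd ℂ) β = β⁻¹ ∧ β ≠ 0 ∧
      (β ^ 2 = 1 ∨ β ^ 2 = u ^ 2 ∨ β ^ 2 = v ^ 2 ∨ β ^ 2 = w ^ 2) := by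
    simp only [Set.mem_insert_iff, Set.mem_singleton_iff] at hβU
    rcases hβU with rfl | rfl | rfl | rfl
    · exact ⟨hc1, one_ne_zero, Or.inl (one_pow 2)⟩
    · exact ⟨hcu, hu0, Or.inr (Or.inl rfl)⟩
    · exact ⟨hcv, hv0, Or.inr (Or.inr (Or.inl rfl))⟩
    · exact ⟨hcw, hw0, Or.inr (Or.inr (Or.inr rfl))⟩
  have hγfacts : (starRingEnd ℂ) γ = γ⁻¹ ∧ γ ≠ 0 ∧
      (γ ^ 2 = u ^ 2 ∨ γ ^ 2 = v ^ 2 ∨ γ ^ 2 = w ^ 2) := by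
    simp only [Set.mem_insert_iff, Set.mem_singleton_iff] at hγ
    rcases hγ with rfl | rfl | rfl | rfl
    · exact absurd rfl hγ1
    · exact ⟨hcu, hu0, Or.inl rfl⟩
    · exact ⟨hcv, hv0, Or.inr (Or.inl rfl)⟩
    · exact ⟨hcw, hw0, Or.inr (Or.inr rfl)⟩
  obtain ⟨hcα, hα0, hsqα⟩ := hαfacts
  obtain ⟨hcβ, hβ0, hsqβ⟩ := hβfacts
  obtain ⟨hcγ, hγ0, hsqγ⟩ := hγfacts
  have hγ1sq : γ ^ 2 ≠ 1 := by
    have := sq_ne γ 1 hγ1 hγ1'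
    simpa using this.symm
  -- rewrite x
  have hCA : w ^ 2 ≠ u ^ 2 := hAC.symm
  have hxval : x = (w ^ 2 - 1) * (v ^ 2 - u ^ 2) / ((w ^ 2 - u ^ 2) * (v ^ 2 - 1)) := by
    rw [hx, full_formula u w v hu0 hw0 hv0 hcu hcw hcv hCA hB1]
  -- rewrite the target value
  rw [full_formula α β γ hα0 hβ0 hγ0 hcα hcβ hcγ hne hγ1sq]
  exact key (u ^ 2) (v ^ 2) (w ^ 2) hA1 hB1 hC1 hAB hAC hBC x hxval
    (α ^ 2) (β ^ 2) (γ ^ 2) hsqα hsqβ hsqγ hne.symm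
end
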